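/- (Reach-set decomposition over covers.) Consider the discrete-time linear time-varying system x_{t+1} = A_t x_t + B_t u_t + C_t a_t with horizon T. Let {θ_i}_{i∈I} be finitely many points of ℝ^n and {a_j}_{j∈J} finitely many adversary sequences, and let ε > 0. Fix t ∈ {0,…,T} and a control sequence u, and suppose the Gramian W_t = Σ_{s=0}^{t-1} α(t,s+1) C_s C_sᵀ α(t,s+1)ᵀ and the matrix α(t,0) are invertible. Then { ξ(x_0, u, a, t) : x_0 ∈ ⋃_{i∈I} B_ε(θ_i), a ∈ ⋃_{j∈J} B_ε(a_j) } = ( ⋃_{i∈I} ⋃_{j∈J} { ξ(θ_i, u, a_j, t) } ) ⊕ R_t ⊕ B_t, where R_t = { x : xᵀ W_t^{-1} x ≤ ε² }, B_t = { x : xᵀ (α(t,0) α(t,0)ᵀ)^{-1} x ≤ ε² }, and B_ε(a_j) denotes the ℓ²-ball { a : Σ_{s=0}^{T-1} ‖a_s − (a_j)_s‖² ≤ ε² } of adversary sequences. -/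

import Mathlib

/-
Trajectories are affine in the initial state and the adversary:
`ξ(x₀,u,a,t) - ξ(θ,u,a',t) = α(t,0) (x₀ - θ) + ∑_{s<t} α(t,s+1) C_s (a_s - a'_s)`.
So the states reachable from one ball of initial states and one ball of adversaries are the
nominal state, plus the image of the `ε`-ball under `α(t,0)`, plus the image of the `ε`-energy
ball of the first `t ≤ T` adversary steps under the block row
`L = [α(t,1) C_0 | ⋯ | α(t,t) C_{t-1}]`. The image of the `ε`-ball under a matrix `L` with
`L Lᵀ` invertible is the ellipsoid `xᵀ (L Lᵀ)⁻¹ x ≤ ε²`, because `Lᵀ (L Lᵀ)⁻¹ x` is the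
least-norm preimage of `x`; here `L Lᵀ = W_t`. Finally, Minkowski sums distribute over the
unions of the cover.
-/

open Finset Matrix Pointwise Metric

noncomputable section

/-- Transition matrix `α(t₁, t₀)`: `α(t₀,t₀) = I`, `α(t₁+1,t₀) = A t₁ * α(t₁,t₀)`. -/
def transMat {n : ℕ} (A : ℕ → Matrix (Fin n) (Fin n) ℝ) : ℕ → ℕ → Matrix (Fin n) (Fin n) ℝ
  | 0, _ => 1
  | t + 1, t0 => if t + 1 ≤ t0 then 1 else A t * transMat A t t0

/-- State `x_t` of the system `x_{t+1} = A_t x_t + B_t u_t + C_t a_t`. -/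
def traj {n m l : ℕ} (A : ℕ → Matrix (Fin n) (Fin n) ℝ)
    (B : ℕ → Matrix (Fin n) (Fin m) ℝ) (C : ℕ → Matrix (Fin n) (Fin l) ℝ)
    (x0 : EuclideanSpace ℝ (Fin n)) (u : ℕ → EuclideanSpace ℝ (Fin m))
    (a : ℕ → EuclideanSpace ℝ (Fin l)) : ℕ → EuclideanSpace ℝ (Fin n)
  | 0 => x0
  | t + 1 => WithLp.toLp 2 ((A t).mulVec (traj A B C x0 u a t) + (B t).mulVec (u t) + (C t).mulVec (a t))

namespace Matrix

section

variable {m κ σ : Type*}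

def blockRow (G : σ → Matrix m κ ℝ) : Matrix m (σ × κ) ℝ :=
  of fun i p => G p.1 i p.2

variable [Fintype κ] [Fintype σ]

theorem blockRow_mul_transpose (G : σ → Matrix m κ ℝ) :
    blockRow G * (blockRow G)ᵀ = ∑ s, G s * (G s)ᵀ := by
  ext i j
  simp [blockRow, mul_apply, sum_apply, Fintype.sum_prod_type]

theorem blockRow_mulVec (G : σ → Matrix m κ ℝ) (d : σ × κ → ℝ) :
    blockRow G *ᵥ d = ∑ s, G s *ᵥ fun k => d (s, k) := by
  ext i
  simp [blockRow, mulVec, dotProduct, Fintype.sum_prod_type]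

end

variable {m ι : Type*} [Fintype m] [DecidableEq m] [Fintype ι] {L : Matrix m ι ℝ}

theorem dotProduct_mulVec_inv_mul_transpose_le_iff (hL : IsUnit (L * Lᵀ)) (x : m → ℝ) (r : ℝ) :
    x ⬝ᵥ (L * Lᵀ)⁻¹ *ᵥ x ≤ r ↔ ∃ d, d ⬝ᵥ d ≤ r ∧ L *ᵥ d = x := by
  have hinv : L * Lᵀ * (L * Lᵀ)⁻¹ = 1 := mul_nonsing_inv _ ((isUnit_iff_isUnit_det _).mp hL)
  set y := (L * Lᵀ)⁻¹ *ᵥ x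
  -- `q` is the least-norm preimage of `x`, and its squared norm is the quadratic form.
  set q := Lᵀ *ᵥ y
  have hLq : L *ᵥ q = x := by simp only [q, y, mulVec_mulVec, ← Matrix.mul_assoc, hinv, one_mulVec]
  have hqd : ∀ d, L *ᵥ d = x → q ⬝ᵥ d = x ⬝ᵥ y := fun d hd => by
    rw [← hd, dotProduct_comm, dotProduct_mulVec, vecMul_transpose, dotProduct_comm,
      dotProduct_comm y]
  have hqq : q ⬝ᵥ q = x ⬝ᵥ y := hqd q hLq
  constructor
  · exact fun h => ⟨q, hqq ▸ h, hLq⟩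
  · rintro ⟨d, hd, rfl⟩
    have hsq : 0 ≤ (d - q) ⬝ᵥ (d - q) := dotProduct_self_star_nonneg _
    rw [sub_dotProduct, dotProduct_sub, dotProduct_sub, dotProduct_comm d q, hqd d rfl, hqq] at hsq
    linarith

theorem setOf_dotProduct_mulVec_inv_mul_transpose_le [DecidableEq ι] (hL : IsUnit (L * Lᵀ))
    {ε : ℝ} (hε : 0 ≤ ε) :
    {x : EuclideanSpace ℝ m | x.ofLp ⬝ᵥ (L * Lᵀ)⁻¹ *ᵥ x.ofLp ≤ ε ^ 2} =
      toEuclideanLin L '' closedBall 0 ε := by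
  ext x
  simp only [Set.mem_ofPred_eq, dotProduct_mulVec_inv_mul_transpose_le_iff hL, Set.mem_image,
    mem_closedBall_zero_iff]
  constructor
  · rintro ⟨d, hd, hLd⟩
    refine ⟨WithLp.toLp 2 d, ?_, ?_⟩
    · rw [← sq_le_sq₀ (norm_nonneg _) hε, EuclideanSpace.real_norm_sq_eq]
      simpa [dotProduct, sq] using hd
    · rw [toLpLin_toLp, toLin'_apply, hLd]
  · rintro ⟨d, hd, rfl⟩
    refine ⟨d.ofLp, ?_, rfl⟩
    rw [← sq_le_sq₀ (norm_nonneg _) hε, EuclideanSpace.real_norm_sq_eq] at hd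
    simpa [dotProduct, sq] using hd

end Matrix

section LTV

variable {n m l : ℕ} (A : ℕ → Matrix (Fin n) (Fin n) ℝ)
  (B : ℕ → Matrix (Fin n) (Fin m) ℝ) (C : ℕ → Matrix (Fin n) (Fin l) ℝ)

theorem transMat_self (t : ℕ) : transMat A t t = 1 := by
  cases t <;> simp [transMat]

theorem transMat_succ {t t0 : ℕ} (h : t0 ≤ t) :
    transMat A (t + 1) t0 = A t * transMat A t t0 := by
  simp [transMat, show ¬t + 1 ≤ t0 by omega]

theorem traj_succ (x0 : EuclideanSpace ℝ (Fin n)) (u : ℕ → EuclideanSpace ℝ (Fin m))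
    (a : ℕ → EuclideanSpace ℝ (Fin l)) (t : ℕ) :
    traj A B C x0 u a (t + 1) = toEuclideanLin (A t) (traj A B C x0 u a t) +
      toEuclideanLin (B t) (u t) + toEuclideanLin (C t) (a t) :=
  rfl

def adversaryResponse (t : ℕ) (e : ℕ → EuclideanSpace ℝ (Fin l)) : EuclideanSpace ℝ (Fin n) :=
  ∑ s ∈ range t, toEuclideanLin (transMat A t (s + 1) * C s) (e s)

theorem adversaryResponse_succ (t : ℕ) (e : ℕ → EuclideanSpace ℝ (Fin l)) :
    adversaryResponse A C (t + 1) e =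
      toEuclideanLin (A t) (adversaryResponse A C t e) + toEuclideanLin (C t) (e t) := by
  rw [adversaryResponse, adversaryResponse, sum_range_succ, transMat_self, Matrix.one_mul, map_sum]
  congr 1
  refine sum_congr rfl fun s hs => ?_
  rw [transMat_succ A (mem_range.mp hs), Matrix.mul_assoc, toLpLin_mul_same, LinearMap.comp_apply]

theorem traj_sub_traj (u : ℕ → EuclideanSpace ℝ (Fin m)) (x0 θ : EuclideanSpace ℝ (Fin n))
    (a a' : ℕ → EuclideanSpace ℝ (Fin l)) (t : ℕ) :
    traj A B C x0 u a t - traj A B C θ u a' t =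
      toEuclideanLin (transMat A t 0) (x0 - θ) + adversaryResponse A C t (a - a') := by
  induction t with
  | zero => simp [traj, transMat, adversaryResponse]
  | succ t ih =>
    have hstep : traj A B C x0 u a (t + 1) - traj A B C θ u a' (t + 1) =
        toEuclideanLin (A t) (traj A B C x0 u a t - traj A B C θ u a' t) +
          toEuclideanLin (C t) (a t - a' t) := by
      rw [traj_succ, traj_succ, map_sub, map_sub]
      abel
    rw [hstep, ih, map_add, adversaryResponse_succ, transMat_succ A t.zero_le,
      toLpLin_mul_same, LinearMap.comp_apply, Pi.sub_apply, add_assoc]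

end LTV

section Gramian

variable {n l t : ℕ}

def flatten (t : ℕ) (e : ℕ → EuclideanSpace ℝ (Fin l)) : Fin t × Fin l → ℝ :=
  fun p => e p.1 p.2

theorem flatten_dotProduct_self (e : ℕ → EuclideanSpace ℝ (Fin l)) :
    flatten t e ⬝ᵥ flatten t e = ∑ s ∈ range t, ‖e s‖ ^ 2 := by
  rw [← Fin.sum_univ_eq_sum_range (fun s => ‖e s‖ ^ 2), dotProduct, Fintype.sum_prod_type]
  refine sum_congr rfl fun s _ => ?_
  rw [EuclideanSpace.real_norm_sq_eq]
  simp only [flatten, sq]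

theorem flatten_surjective : Function.Surjective (flatten (l := l) t) := fun d =>
  ⟨fun s => if h : s < t then WithLp.toLp 2 fun k => d (⟨s, h⟩, k) else 0, by
    ext ⟨s, k⟩
    simp [flatten]⟩

theorem toLp_blockRow_mulVec_flatten (G : ℕ → Matrix (Fin n) (Fin l) ℝ)
    (e : ℕ → EuclideanSpace ℝ (Fin l)) :
    WithLp.toLp 2 (blockRow (fun s : Fin t => G s) *ᵥ flatten t e) =
      ∑ s ∈ range t, toEuclideanLin (G s) (e s) := by
  rw [blockRow_mulVec, ← Fin.sum_univ_eq_sum_range (fun s => toEuclideanLin (G s) (e s)),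
    WithLp.toLp_sum]
  rfl

theorem setOf_dotProduct_mulVec_gramian_inv_le (G : ℕ → Matrix (Fin n) (Fin l) ℝ)
    (hW : IsUnit (∑ s ∈ range t, G s * (G s)ᵀ)) (r : ℝ) :
    {x : EuclideanSpace ℝ (Fin n) |
        x.ofLp ⬝ᵥ (∑ s ∈ range t, G s * (G s)ᵀ)⁻¹ *ᵥ x.ofLp ≤ r} =
      (fun e : ℕ → EuclideanSpace ℝ (Fin l) => ∑ s ∈ range t, toEuclideanLin (G s) (e s)) ''
        {e | ∑ s ∈ range t, ‖e s‖ ^ 2 ≤ r} := by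
  have hgram : ∑ s ∈ range t, G s * (G s)ᵀ =
      blockRow (fun s : Fin t => G s) * (blockRow fun s : Fin t => G s)ᵀ := by
    rw [blockRow_mul_transpose, ← Fin.sum_univ_eq_sum_range (fun s => G s * (G s)ᵀ)]
  rw [hgram] at hW ⊢
  ext x
  simp only [Set.mem_ofPred_eq, dotProduct_mulVec_inv_mul_transpose_le_iff hW, Set.mem_image]
  constructor
  · rintro ⟨d, hd, hx⟩
    obtain ⟨e, rfl⟩ := flatten_surjective d
    exact ⟨e, flatten_dotProduct_self e ▸ hd, by rw [← toLp_blockRow_mulVec_flatten, hx]⟩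
  · rintro ⟨e, he, rfl⟩
    exact ⟨flatten t e, (flatten_dotProduct_self e).symm ▸ he,
      by rw [← toLp_blockRow_mulVec_flatten]⟩

end Gramian

section Reach

variable {n m l : ℕ} (A : ℕ → Matrix (Fin n) (Fin n) ℝ) (B : ℕ → Matrix (Fin n) (Fin m) ℝ)
  (C : ℕ → Matrix (Fin n) (Fin l) ℝ) (u : ℕ → EuclideanSpace ℝ (Fin m))

def reachSet (T t : ℕ) (θ : EuclideanSpace ℝ (Fin n)) (a' : ℕ → EuclideanSpace ℝ (Fin l)) (ε : ℝ) :
    Set (EuclideanSpace ℝ (Fin n)) :=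
  {x | ∃ x0 ∈ closedBall θ ε, ∃ a : ℕ → EuclideanSpace ℝ (Fin l),
    ∑ s ∈ range T, ‖a s - a' s‖ ^ 2 ≤ ε ^ 2 ∧ x = traj A B C x0 u a t}

theorem reachSet_eq_add {T t : ℕ} (ht : t ≤ T) (θ : EuclideanSpace ℝ (Fin n))
    (a' : ℕ → EuclideanSpace ℝ (Fin l)) (ε : ℝ) :
    reachSet A B C u T t θ a' ε = {traj A B C θ u a' t} +
      adversaryResponse A C t '' {e | ∑ s ∈ range t, ‖e s‖ ^ 2 ≤ ε ^ 2} +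
      toEuclideanLin (transMat A t 0) '' closedBall 0 ε := by
  have hdecomp : ∀ x0 a, traj A B C x0 u a t = traj A B C θ u a' t +
      adversaryResponse A C t (a - a') + toEuclideanLin (transMat A t 0) (x0 - θ) := by
    intro x0 a
    rw [add_assoc, add_comm (adversaryResponse A C t _), ← traj_sub_traj, add_sub_cancel]
  have hsub : range t ⊆ range T := range_subset_range.mpr ht
  ext x
  constructor
  · rintro ⟨x0, hx0, a, ha, rfl⟩
    have henergy : ∑ s ∈ range t, ‖(a - a') s‖ ^ 2 ≤ ε ^ 2 :=
      (sum_le_sum_of_subset_of_nonneg hsub fun _ _ _ => sq_nonneg _).trans ha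
    have hball : x0 - θ ∈ closedBall 0 ε := by
      rwa [mem_closedBall_zero_iff, ← mem_closedBall_iff_norm]
    rw [hdecomp x0 a]
    exact Set.add_mem_add (Set.add_mem_add rfl ⟨a - a', henergy, rfl⟩) ⟨x0 - θ, hball, rfl⟩
  · rintro ⟨_, ⟨_, rfl, _, ⟨e, he, rfl⟩, rfl⟩, _, ⟨v, hv, rfl⟩, rfl⟩
    set a := fun s => if s < t then a' s + e s else a' s
    have hae : ∀ s, a s - a' s = if s < t then e s else 0 := fun s => by
      by_cases hs : s < t <;> simp [a, hs]
    have hresp : adversaryResponse A C t (a - a') = adversaryResponse A C t e :=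
      sum_congr rfl fun s hs => by simp [hae, mem_range.mp hs]
    refine ⟨θ + v, by rwa [mem_closedBall_iff_norm, add_sub_cancel_left, ← mem_closedBall_zero_iff],
      a, ?_, by rw [hdecomp (θ + v) a, hresp, add_sub_cancel_left]⟩
    calc ∑ s ∈ range T, ‖a s - a' s‖ ^ 2 = ∑ s ∈ range t, ‖e s‖ ^ 2 := by
          rw [← sum_subset hsub fun s _ hs => by simp [hae, mem_range.not.mp hs]]
          exact sum_congr rfl fun s hs => by simp [hae, mem_range.mp hs]
      _ ≤ ε ^ 2 := he

end Reach

theorem reach_decomposition_cover_general {n m l : ℕ} {I J : Type*}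
    (A : ℕ → Matrix (Fin n) (Fin n) ℝ)
    (B : ℕ → Matrix (Fin n) (Fin m) ℝ) (C : ℕ → Matrix (Fin n) (Fin l) ℝ)
    (T : ℕ) (t : ℕ) (ht : t ≤ T)
    (θ : I → EuclideanSpace ℝ (Fin n))
    (aj : J → ℕ → EuclideanSpace ℝ (Fin l))
    (ε : ℝ) (hε : 0 < ε)
    (u : ℕ → EuclideanSpace ℝ (Fin m))
    (W : Matrix (Fin n) (Fin n) ℝ)
    (hW : W = ∑ s ∈ Finset.range t,
        transMat A t (s + 1) * C s * (C s)ᵀ * (transMat A t (s + 1))ᵀ)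
    (hWinv : IsUnit W) (hα : IsUnit (transMat A t 0))
    (Rt Bt : Set (EuclideanSpace ℝ (Fin n)))
    (hRt : Rt = {x : EuclideanSpace ℝ (Fin n) | x.ofLp ⬝ᵥ (W⁻¹).mulVec x.ofLp ≤ ε ^ 2})
    (hBt : Bt = {x : EuclideanSpace ℝ (Fin n) | x.ofLp ⬝ᵥ ((transMat A t 0 * (transMat A t 0)ᵀ)⁻¹).mulVec x.ofLp ≤ ε ^ 2}) :
    {x : EuclideanSpace ℝ (Fin n) |
        ∃ x0 ∈ ⋃ i : I, Metric.closedBall (θ i) ε,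
          ∃ a : ℕ → EuclideanSpace ℝ (Fin l),
            (∃ j : J, (∑ s ∈ Finset.range T, ‖a s - aj j s‖ ^ 2) ≤ ε ^ 2) ∧
            x = traj A B C x0 u a t} =
      (⋃ i : I, ⋃ j : J, {traj A B C (θ i) u (aj j) t}) + Rt + Bt := by
  have hgram : W = ∑ s ∈ range t,
      (transMat A t (s + 1) * C s) * (transMat A t (s + 1) * C s)ᵀ := by
    simp only [hW, transpose_mul, Matrix.mul_assoc]
  have hR : Rt = adversaryResponse A C t '' {e | ∑ s ∈ range t, ‖e s‖ ^ 2 ≤ ε ^ 2} := by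
    rw [hRt, hgram]
    exact setOf_dotProduct_mulVec_gramian_inv_le _ (hgram ▸ hWinv) _
  have hB : Bt = toEuclideanLin (transMat A t 0) '' closedBall 0 ε :=
    hBt ▸ setOf_dotProduct_mulVec_inv_mul_transpose_le
      (hα.mul ((isUnit_transpose _).mpr hα)) hε.le
  calc _ = ⋃ i, ⋃ j, reachSet A B C u T t (θ i) (aj j) ε := by
        ext x
        simp only [reachSet, Set.mem_iUnion, Set.mem_ofPred_eq]
        constructor
        · rintro ⟨x0, ⟨i, hx0⟩, a, ⟨j, ha⟩, rfl⟩
          exact ⟨i, j, x0, hx0, a, ha, rfl⟩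
        · rintro ⟨i, j, x0, hx0, a, ha, rfl⟩
          exact ⟨x0, ⟨i, hx0⟩, a, ⟨j, ha⟩, rfl⟩
    _ = _ := by simp only [reachSet_eq_add A B C u ht, Set.iUnion_add, hR, hB]

/-- Reach-set decomposition over covers: the reachable set at time `t ≤ T`
from a finite union of `ε`-balls of initial states and a finite union of
`ε`-balls of adversary sequences equals the union of the nominal states
`ξ(θ_i, u, a_j, t)` plus the adversary leverage `R_t` plus the initialization
factor `B_t`. -/
theorem reach_decomposition_cover {n m l : ℕ} {I J : Type*} [Fintype I] [Fintype J]
    (A : ℕ → Matrix (Fin n) (Fin n) ℝ)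
    (B : ℕ → Matrix (Fin n) (Fin m) ℝ) (C : ℕ → Matrix (Fin n) (Fin l) ℝ)
    (T : ℕ) (t : ℕ) (ht : t ≤ T)
    (θ : I → EuclideanSpace ℝ (Fin n))
    (aj : J → ℕ → EuclideanSpace ℝ (Fin l))
    (ε : ℝ) (hε : 0 < ε)
    (u : ℕ → EuclideanSpace ℝ (Fin m))
    (W : Matrix (Fin n) (Fin n) ℝ)
    (hW : W = ∑ s ∈ Finset.range t,
        transMat A t (s + 1) * C s * (C s)ᵀ * (transMat A t (s + 1))ᵀ)
    (hWinv : IsUnit W) (hα : IsUnit (transMat A t 0))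
    (Rt Bt : Set (EuclideanSpace ℝ (Fin n)))
    (hRt : Rt = {x : EuclideanSpace ℝ (Fin n) | x.ofLp ⬝ᵥ (W⁻¹).mulVec x.ofLp ≤ ε ^ 2})
    (hBt : Bt = {x : EuclideanSpace ℝ (Fin n) | x.ofLp ⬝ᵥ ((transMat A t 0 * (transMat A t 0)ᵀ)⁻¹).mulVec x.ofLp ≤ ε ^ 2}) :
    {x : EuclideanSpace ℝ (Fin n) |
        ∃ x0 ∈ ⋃ i : I, Metric.closedBall (θ i) ε,
          ∃ a : ℕ → EuclideanSpace ℝ (Fin l),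
            (∃ j : J, (∑ s ∈ Finset.range T, ‖a s - aj j s‖ ^ 2) ≤ ε ^ 2) ∧
            x = traj A B C x0 u a t} =
      (⋃ i : I, ⋃ j : J, {traj A B C (θ i) u (aj j) t}) + Rt + Bt :=
  reach_decomposition_cover_general A B C T t ht θ aj ε hε u W hW hWinv hα Rt Bt hRt hBt
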